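/- arXiv:2103.12580 — 2 statements merged into one kernel-verified Lean document; each statement's English description precedes it below -/
import Mathlib

section
/- If J : [0,∞) → ℝ is differentiable, nonnegative, and satisfies J'(t) ≤ -γ √(J(t)) for all t ≥ 0 with a constant γ > 0, then J(t) = 0 for all t ≥ t_F where t_F = 2√(J(0))/γ. -/
/-!
While `J > 0`, the inequality `J' ≤ -γ √J` says `(√J)' = J' / (2√J) ≤ -γ/2`, so `√J` decreases
at rate at least `γ/2` and cannot stay positive beyond `t_F = 2√(J 0)/γ`. Since `J' ≤ 0`, `J` is
nonincreasing, so once it hits zero it stays there.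
-/

open Set

lemma deriv_sqrt_le_of_deriv_le_neg_mul_sqrt {J : ℝ → ℝ} {γ t : ℝ}
    (hdiff : DifferentiableAt ℝ J t) (hpos : 0 < J t) (hineq : deriv J t ≤ -γ * √(J t)) :
    deriv (fun s => √(J s)) t ≤ -(γ / 2) := by
  have hsqrt : 0 < √(J t) := Real.sqrt_pos.2 hpos
  rw [(hdiff.hasDerivAt.sqrt hpos.ne').deriv, div_le_iff₀ (by positivity)]
  linarith

lemma sqrt_sub_sqrt_le_of_deriv_le_neg_mul_sqrt {J : ℝ → ℝ} {γ a b : ℝ} (hab : a ≤ b)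
    (hcont : ContinuousOn J (Icc a b)) (hdiff : ∀ t ∈ Ioo a b, DifferentiableAt ℝ J t)
    (hpos : ∀ t ∈ Ioo a b, 0 < J t) (hineq : ∀ t ∈ Ioo a b, deriv J t ≤ -γ * √(J t)) :
    √(J b) - √(J a) ≤ -(γ / 2) * (b - a) := by
  refine (convex_Icc a b).image_sub_le_mul_sub_of_deriv_le hcont.sqrt ?_ ?_ a
    (left_mem_Icc.2 hab) b (right_mem_Icc.2 hab) hab
  all_goals rw [interior_Icc]
  · exact fun t ht => ((hdiff t ht).hasDerivAt.sqrt (hpos t ht).ne').differentiableAt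
      |>.differentiableWithinAt
  · exact fun t ht => deriv_sqrt_le_of_deriv_le_neg_mul_sqrt (hdiff t ht) (hpos t ht) (hineq t ht)

theorem stmt_5 (J : ℝ → ℝ) (γ : ℝ) (hγ : 0 < γ)
    (hdiff : Differentiable ℝ J)
    (hnonneg : ∀ t, 0 ≤ t → 0 ≤ J t)
    (hineq : ∀ t, 0 ≤ t → deriv J t ≤ -γ * Real.sqrt (J t)) :
    ∀ t, 2 * Real.sqrt (J 0) / γ ≤ t → J t = 0 := by
  set tF := 2 * √(J 0) / γ
  have htF : 0 ≤ tF := by positivity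
  have hanti : AntitoneOn J (Ici 0) := by
    refine antitoneOn_of_deriv_nonpos (convex_Ici 0) hdiff.continuous.continuousOn
      hdiff.differentiableOn fun t ht => ?_
    rw [interior_Ici] at ht
    nlinarith [hineq t ht.le, Real.sqrt_nonneg (J t)]
  have hJtF : J tF = 0 := by
    by_contra hne
    have hpos : 0 < J tF := (hnonneg tF htF).lt_of_ne' hne
    have hposOn : ∀ t ∈ Ioo 0 tF, 0 < J t := fun t ht =>
      hpos.trans_le (hanti ht.1.le htF ht.2.le)
    have hdrop := sqrt_sub_sqrt_le_of_deriv_le_neg_mul_sqrt htF hdiff.continuous.continuousOn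
      (fun t _ => hdiff t) hposOn (fun t ht => hineq t ht.1.le)
    have hγtF : γ / 2 * tF = √(J 0) := by unfold tF; field_simp
    linarith [Real.sqrt_pos.2 hpos]
  intro t ht
  exact le_antisymm (hJtF ▸ hanti htF (htF.trans ht) ht) (hnonneg t (htF.trans ht))
end

section
/- If J : [0,∞) → ℝ is differentiable, nonnegative, and satisfies J'(t) ≤ -γ √(J(t)) with γ > 0, then for all t in [0, 2√(J(0))/γ] one has √(J(t)) ≤ √(J(0)) - (γ/2) t. -/
open Set

/- Compare `J` with the barrier `(c - γ (t - a) / 2)² + ε`, which solves `B' = -γ √(B - ε)`: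
where `J` touches it, `√J` exceeds `c - γ (t - a) / 2`, so `J' ≤ -γ √J` is strictly below `B'`.
Letting `ε → 0` gives `J t ≤ (c - γ (t - a) / 2)²`, and taking square roots gives the bound
as long as `c - γ (t - a) / 2 ≥ 0`. -/

theorem hasDerivAt_sq_sub_mul_add (a c γ ε x : ℝ) :
    HasDerivAt (fun t => (c - γ / 2 * (t - a)) ^ 2 + ε) (-γ * (c - γ / 2 * (x - a))) x :=
  (((((hasDerivAt_id' x).sub_const a).const_mul (γ / 2)).const_sub c).fun_pow 2 |>.add_const ε
    |>.congr_deriv (by ring))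

theorem le_sq_add_of_deriv_le_neg_mul_sqrt {J J' : ℝ → ℝ} {a b c γ ε : ℝ} (hγ : 0 < γ)
    (hε : 0 < ε) (hJ : ContinuousOn J (Icc a b))
    (hJ' : ∀ x ∈ Ico a b, HasDerivWithinAt J (J' x) (Ici x) x)
    (hineq : ∀ x ∈ Ico a b, J' x ≤ -γ * √(J x)) (ha : J a ≤ c ^ 2) :
    ∀ t ∈ Icc a b, J t ≤ (c - γ / 2 * (t - a)) ^ 2 + ε := by
  refine image_le_of_deriv_right_lt_deriv_boundary hJ hJ'
    (by simpa using ha.trans (le_add_of_nonneg_right hε.le))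
    (hasDerivAt_sq_sub_mul_add a c γ ε) fun x hx hJx => ?_
  have hsqrt : c - γ / 2 * (x - a) < √(J x) := Real.lt_sqrt_of_sq_lt (by linarith)
  calc J' x ≤ -γ * √(J x) := hineq x hx
    _ < -γ * (c - γ / 2 * (x - a)) := by nlinarith

theorem le_sq_of_deriv_le_neg_mul_sqrt {J J' : ℝ → ℝ} {a b c γ : ℝ} (hγ : 0 < γ)
    (hJ : ContinuousOn J (Icc a b))
    (hJ' : ∀ x ∈ Ico a b, HasDerivWithinAt J (J' x) (Ici x) x)
    (hineq : ∀ x ∈ Ico a b, J' x ≤ -γ * √(J x)) (ha : J a ≤ c ^ 2) :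
    ∀ t ∈ Icc a b, J t ≤ (c - γ / 2 * (t - a)) ^ 2 := fun t ht =>
  le_of_forall_pos_le_add fun _ hε =>
    le_sq_add_of_deriv_le_neg_mul_sqrt hγ hε hJ hJ' hineq ha t ht

theorem sqrt_le_sub_of_deriv_le_neg_mul_sqrt {J J' : ℝ → ℝ} {a b c γ : ℝ} (hγ : 0 < γ)
    (hJ : ContinuousOn J (Icc a b))
    (hJ' : ∀ x ∈ Ico a b, HasDerivWithinAt J (J' x) (Ici x) x)
    (hineq : ∀ x ∈ Ico a b, J' x ≤ -γ * √(J x)) (ha : J a ≤ c ^ 2) {t : ℝ} (ht : t ∈ Icc a b)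
    (hc : γ / 2 * (t - a) ≤ c) :
    √(J t) ≤ c - γ / 2 * (t - a) :=
  (Real.sqrt_le_left (by linarith)).2 (le_sq_of_deriv_le_neg_mul_sqrt hγ hJ hJ' hineq ha t ht)

theorem stmt_6_general (J : ℝ → ℝ) (γ : ℝ) (hγ : 0 < γ)
    (hdiff : Differentiable ℝ J)
    (hineq : ∀ t, 0 ≤ t → deriv J t ≤ -γ * Real.sqrt (J t)) :
    ∀ t ∈ Set.Icc (0 : ℝ) (2 * Real.sqrt (J 0) / γ),
      Real.sqrt (J t) ≤ Real.sqrt (J 0) - γ / 2 * t := by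
  intro t ht
  have hc : γ / 2 * (t - 0) ≤ √(J 0) := by
    have := (le_div_iff₀ hγ).1 ht.2
    linarith
  simpa using sqrt_le_sub_of_deriv_le_neg_mul_sqrt hγ hdiff.continuous.continuousOn
    (fun x _ => (hdiff x).hasDerivAt.hasDerivWithinAt) (fun x hx => hineq x hx.1)
    (by rw [Real.sq_sqrt']; exact le_max_left _ _) ht hc

theorem stmt_6 (J : ℝ → ℝ) (γ : ℝ) (hγ : 0 < γ)
    (hdiff : Differentiable ℝ J)
    (hnonneg : ∀ t, 0 ≤ t → 0 ≤ J t)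
    (hineq : ∀ t, 0 ≤ t → deriv J t ≤ -γ * Real.sqrt (J t)) :
    ∀ t ∈ Set.Icc (0 : ℝ) (2 * Real.sqrt (J 0) / γ),
      Real.sqrt (J t) ≤ Real.sqrt (J 0) - γ / 2 * t :=
  stmt_6_general J γ hγ hdiff hineq
end
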